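/- arXiv:2303.15476 — 2 statements merged into one kernel-verified Lean document; each statement's English description precedes it below -/
import Mathlib

section
/- There exists an edge-coloring of the complete graph K_13 with 6 colors such that every vertex is incident to exactly 2 edges of each color and no copy of K_4 has all six edges colored with distinct colors. -/
/-!
For a symmetric coloring, whether four vertices span a rainbow `K₄` does not depend on the order
in which they are listed, so it suffices to rule out rainbow increasing 4-tuples. For the
explicit coloring below this, like symmetry and balance, is a finite check.
-/

section RainbowK4

variable {α κ : Type*} {c : α → α → κ} {a b d e : α}

def IsRainbowK4 (c : α → α → κ) (a b d e : α) : Prop :=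
  [c a b, c a d, c a e, c b d, c b e, c d e].Nodup

instance [DecidableEq κ] : Decidable (IsRainbowK4 c a b d e) :=
  List.nodupDecidable _

theorem isRainbowK4_iff : IsRainbowK4 c a b d e ↔
    c a b ≠ c a d ∧ c a b ≠ c a e ∧ c a b ≠ c b d ∧ c a b ≠ c b e ∧ c a b ≠ c d e ∧
    c a d ≠ c a e ∧ c a d ≠ c b d ∧ c a d ≠ c b e ∧ c a d ≠ c d e ∧
    c a e ≠ c b d ∧ c a e ≠ c b e ∧ c a e ≠ c d e ∧
    c b d ≠ c b e ∧ c b d ≠ c d e ∧ c b e ≠ c d e := by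
  simp only [IsRainbowK4, List.nodup_cons, List.mem_cons, List.not_mem_nil, or_false,
    List.nodup_nil, and_true, not_or]
  tauto

theorem IsRainbowK4.swap_ab (hc : ∀ x y, c x y = c y x) (h : IsRainbowK4 c a b d e) :
    IsRainbowK4 c b a d e := by
  rw [isRainbowK4_iff] at h ⊢
  rw [hc b a]
  tauto

theorem IsRainbowK4.swap_bd (hc : ∀ x y, c x y = c y x) (h : IsRainbowK4 c a b d e) :
    IsRainbowK4 c a d b e := by
  rw [isRainbowK4_iff] at h ⊢
  rw [hc d b]
  tauto

theorem IsRainbowK4.swap_de (hc : ∀ x y, c x y = c y x) (h : IsRainbowK4 c a b d e) :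
    IsRainbowK4 c a b e d := by
  rw [isRainbowK4_iff] at h ⊢
  rw [hc e d]
  tauto

theorem IsRainbowK4.pairwise_ne (hc : ∀ x y, c x y = c y x) (h : IsRainbowK4 c a b d e) :
    a ≠ b ∧ a ≠ d ∧ a ≠ e ∧ b ≠ d ∧ b ≠ e ∧ d ≠ e := by
  rw [isRainbowK4_iff] at h
  refine ⟨?_, ?_, ?_, ?_, ?_, ?_⟩ <;> rintro rfl <;> simp_all

/-- Insertion sort of `(a, b, d, e)` by the adjacent transpositions `swap_ab`, `swap_bd`,
`swap_de`. -/
theorem IsRainbowK4.exists_lt_lt_lt [LinearOrder α] (hc : ∀ x y, c x y = c y x)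
    (h : IsRainbowK4 c a b d e) : ∃ w x y z, w < x ∧ x < y ∧ y < z ∧ IsRainbowK4 c w x y z := by
  wlog hab : a < b generalizing a b
  · obtain ⟨hab', -⟩ := h.pairwise_ne hc
    exact this (h.swap_ab hc) (hab'.lt_or_gt.resolve_left hab)
  wlog hbd : b < d generalizing a b d
  · obtain ⟨-, had, -, hbd', -⟩ := h.pairwise_ne hc
    have hdb := hbd'.lt_or_gt.resolve_left hbd
    rcases had.lt_or_gt with had | hda
    · exact this (h.swap_bd hc) had hdb
    · exact this ((h.swap_bd hc).swap_ab hc) hda hab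
  wlog hde : d < e generalizing a b d e
  · obtain ⟨-, -, hae, -, hbe, hde'⟩ := h.pairwise_ne hc
    have hed := hde'.lt_or_gt.resolve_left hde
    rcases hbe.lt_or_gt with hbe | heb
    · exact this (h.swap_de hc) hab hbe hed
    rcases hae.lt_or_gt with hae | hea
    · exact this ((h.swap_de hc).swap_bd hc) hae heb hbd
    · exact this (((h.swap_de hc).swap_bd hc).swap_ab hc) hea hab hbd
  exact ⟨a, b, d, e, hab, hbd, hde, h⟩

end RainbowK4

def k13Coloring : Fin 13 → Fin 13 → Fin 6 :=
  ![![0,0,0,1,3,2,1,3,4,2,5,5,4],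
    ![0,0,3,1,5,5,3,4,2,0,4,2,1],
    ![0,3,0,3,4,0,1,5,1,5,2,4,2],
    ![1,1,3,0,5,4,4,0,5,2,2,0,3],
    ![3,5,4,5,0,1,0,2,2,0,3,1,4],
    ![2,5,0,4,1,0,2,0,3,5,3,4,1],
    ![1,3,1,4,0,2,0,5,3,4,0,2,5],
    ![3,4,5,0,2,0,5,0,4,1,1,3,2],
    ![4,2,1,5,2,3,3,4,0,1,0,5,0],
    ![2,0,5,2,0,5,4,1,1,0,4,3,3],
    ![5,4,2,2,3,3,0,1,0,4,0,1,5],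
    ![5,2,4,0,1,4,2,3,5,3,1,0,0],
    ![4,1,2,3,4,1,5,2,0,3,5,0,0]]

theorem k13Coloring_symm : ∀ i j, k13Coloring i j = k13Coloring j i := by
  decide

theorem k13Coloring_balanced : ∀ v : Fin 13, ∀ col : Fin 6,
    (Finset.univ.filter (fun j => j ≠ v ∧ k13Coloring v j = col)).card = 2 := by
  decide

theorem k13Coloring_not_isRainbowK4_of_lt : ∀ a b d e : Fin 13, a < b → b < d → d < e →
    ¬ IsRainbowK4 k13Coloring a b d e := by
  decide

/-- There is a 6-coloring of the edges of K₁₃ such that every vertex is incident to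
exactly 2 edges of each color, and no 4 vertices span six distinctly colored edges. -/
theorem exists_balanced_6coloring_K13_no_rainbow_K4 :
    ∃ c : Fin 13 → Fin 13 → Fin 6,
      (∀ i j, c i j = c j i) ∧
      (∀ v : Fin 13, ∀ col : Fin 6,
        (Finset.univ.filter (fun j => j ≠ v ∧ c v j = col)).card = 2) ∧
      (∀ a b d e : Fin 13, a ≠ b → a ≠ d → a ≠ e → b ≠ d → b ≠ e → d ≠ e →
        ¬ ([c a b, c a d, c a e, c b d, c b e, c d e] : List (Fin 6)).Nodup) := by
  refine ⟨k13Coloring, k13Coloring_symm, k13Coloring_balanced,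
    fun a b d e _ _ _ _ _ _ hrainbow => ?_⟩
  obtain ⟨w, x, y, z, hwx, hxy, hyz, hsorted⟩ :=
    IsRainbowK4.exists_lt_lt_lt k13Coloring_symm hrainbow
  exact k13Coloring_not_isRainbowK4_of_lt w x y z hwx hxy hyz hsorted
end

section
/- If there exists a balanced edge-coloring of K_n with ℓ colors containing no rainbow K_q, then there exists a balanced edge-coloring of K_{n^2} with ℓ colors containing no rainbow K_q. -/
/-- An edge-coloring (given as a symmetric function) is balanced if every vertex is
incident to each color the same number of times. -/
def IsBalanced {n ℓ : ℕ} (c : Fin n → Fin n → Fin ℓ) : Prop :=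
  (∀ i j, c i j = c j i) ∧
  ∃ t : ℕ, ∀ v : Fin n, ∀ col : Fin ℓ,
    (Finset.univ.filter (fun j => j ≠ v ∧ c v j = col)).card = t

/-- The set `s` is rainbow for the coloring `c`: distinct edges inside `s` get
distinct colors. -/
def IsRainbowOn {V : Type*} [DecidableEq V] {ℓ : ℕ} (c : V → V → Fin ℓ)
    (s : Finset V) : Prop :=
  ∀ a ∈ s, ∀ b ∈ s, ∀ a' ∈ s, ∀ b' ∈ s,
    a ≠ b → a' ≠ b' → ({a, b} : Finset V) ≠ {a', b'} → c a b ≠ c a' b'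

/-- The coloring `c` contains a rainbow copy of K_q. -/
def HasRainbowClique {V : Type*} [DecidableEq V] {ℓ : ℕ} (c : V → V → Fin ℓ)
    (q : ℕ) : Prop :=
  ∃ s : Finset V, s.card = q ∧ IsRainbowOn c s

/-!
Color `K_n × K_n` lexicographically by `c`. At a vertex `(u, i)` each color appears `t` times inside
the copy of `u` and `n t` times towards the other copies, so the coloring is balanced. If a rainbow
set had two vertices in one copy and a third vertex outside it, the two edges to that third vertex
would get the same color; so a rainbow set lies in a single copy or meets every copy at most once,
and either way one of the two projections maps it onto a rainbow set of the same size in `K_n`.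
-/

open Finset

section

variable {V W : Type*} [DecidableEq V] [DecidableEq W] {ℓ : ℕ}

def lexProd (c : V → V → Fin ℓ) (p r : V × V) : Fin ℓ :=
  if p.1 = r.1 then c p.2 r.2 else c p.1 r.1

theorem lexProd_comm {c : V → V → Fin ℓ} (hc : ∀ i j, c i j = c j i) (p r : V × V) :
    lexProd c p r = lexProd c r p := by
  unfold lexProd
  by_cases h : p.1 = r.1
  · rw [if_pos h, if_pos h.symm, hc]
  · rw [if_neg h, if_neg (Ne.symm h), hc]

def colorDegree [Fintype V] (c : V → V → Fin ℓ) (v : V) (col : Fin ℓ) : ℕ :=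
  #{j | j ≠ v ∧ c v j = col}

theorem isBalanced_iff {n : ℕ} (c : Fin n → Fin n → Fin ℓ) :
    IsBalanced c ↔ (∀ i j, c i j = c j i) ∧ ∃ t, ∀ v col, colorDegree c v col = t :=
  Iff.rfl

theorem colorDegree_comp_equiv [Fintype V] [Fintype W] (c : V → V → Fin ℓ) (e : W ≃ V) (w : W)
    (col : Fin ℓ) : colorDegree (fun x y => c (e x) (e y)) w col = colorDegree c (e w) col := by
  refine Finset.card_equiv e fun y => ?_
  simp [e.injective.eq_iff]

theorem colorDegree_lexProd [Fintype V] (c : V → V → Fin ℓ) (v : V × V) (col : Fin ℓ) :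
    colorDegree (lexProd c) v col =
      colorDegree c v.2 col + Fintype.card V * colorDegree c v.1 col := by
  obtain ⟨u, i⟩ := v
  have hsplit : ({p | p ≠ (u, i) ∧ lexProd c (u, i) p = col} : Finset (V × V)) =
      ({j | j ≠ i ∧ c i j = col} : Finset V).map (Function.Embedding.sectR u V) ∪
        ({w | w ≠ u ∧ c u w = col} : Finset V) ×ˢ univ := by
    ext ⟨x, j⟩
    by_cases hx : u = x
    · subst hx; simp [lexProd]
    · simp [lexProd, hx, Ne.symm hx]
  have hdisj : Disjoint (({j | j ≠ i ∧ c i j = col} : Finset V).map (Function.Embedding.sectR u V))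
      (({w | w ≠ u ∧ c u w = col} : Finset V) ×ˢ univ) := by
    rw [disjoint_left]
    rintro p hp hp'
    obtain ⟨j, -, rfl⟩ := mem_map.1 hp
    exact (mem_filter.1 (mem_product.1 hp').1).2.1 rfl
  rw [colorDegree, hsplit, card_union_of_disjoint hdisj, card_map, card_product, card_univ,
    Nat.mul_comm]
  rfl

theorem IsRainbowOn.image {c : V → V → Fin ℓ} {c' : W → W → Fin ℓ} {s : Finset V} {f : V → W}
    (hs : IsRainbowOn c s) (hc : ∀ a ∈ s, ∀ b ∈ s, f a ≠ f b → c' (f a) (f b) = c a b) :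
    IsRainbowOn c' (s.image f) := by
  simp only [IsRainbowOn, mem_image]
  rintro _ ⟨a, ha, rfl⟩ _ ⟨b, hb, rfl⟩ _ ⟨a', ha', rfl⟩ _ ⟨b', hb', rfl⟩ hab ha'b' hpair
  rw [hc a ha b hb hab, hc a' ha' b' hb' ha'b']
  refine hs a ha b hb a' ha' b' hb' (ne_of_apply_ne f hab) (ne_of_apply_ne f ha'b') ?_
  intro h
  apply hpair
  simpa using congrArg (Finset.image f) h

theorem IsRainbowOn.hasRainbowClique_image {c : V → V → Fin ℓ} {c' : W → W → Fin ℓ}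
    {s : Finset V} {f : V → W} (hs : IsRainbowOn c s) (hf : Set.InjOn f s)
    (hc : ∀ a ∈ s, ∀ b ∈ s, f a ≠ f b → c' (f a) (f b) = c a b) :
    HasRainbowClique c' s.card :=
  ⟨s.image f, card_image_of_injOn hf, hs.image hc⟩

theorem HasRainbowClique.of_equiv {c : V → V → Fin ℓ} {q : ℕ} (e : W ≃ V)
    (h : HasRainbowClique (fun x y => c (e x) (e y)) q) : HasRainbowClique c q := by
  obtain ⟨s, rfl, hs⟩ := h
  exact hs.hasRainbowClique_image e.injective.injOn fun _ _ _ _ _ => rfl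

theorem IsRainbowOn.lexProd_cases {c : V → V → Fin ℓ} {s : Finset (V × V)}
    (hs : IsRainbowOn (lexProd c) s) :
    (∀ x ∈ s, ∀ y ∈ s, x.1 = y.1) ∨ Set.InjOn Prod.fst (s : Set (V × V)) := by
  refine or_iff_not_imp_left.2 fun hspread x hx y hy hxy => by_contra fun hne => ?_
  push Not at hspread
  obtain ⟨z, hz, hzx⟩ : ∃ z ∈ s, x.1 ≠ z.1 := by
    obtain ⟨x₀, hx₀, y₀, hy₀, h₀⟩ := hspread
    by_cases hx₀x : x.1 = x₀.1
    · exact ⟨y₀, hy₀, hx₀x ▸ h₀⟩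
    · exact ⟨x₀, hx₀, hx₀x⟩
  have hzy : y.1 ≠ z.1 := hxy ▸ hzx
  have hxz : x ≠ z := ne_of_apply_ne Prod.fst hzx
  refine hs x hx z hz y hy z hz hxz (ne_of_apply_ne Prod.fst hzy) (fun hpair => ?_) ?_
  · have : x ∈ ({y, z} : Finset (V × V)) := hpair ▸ mem_insert_self x {z}
    simp [hne, hxz] at this
  · rw [lexProd, lexProd, if_neg hzx, if_neg hzy, hxy]

theorem HasRainbowClique.of_lexProd {c : V → V → Fin ℓ} {q : ℕ}
    (h : HasRainbowClique (lexProd c) q) : HasRainbowClique c q := by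
  obtain ⟨s, rfl, hs⟩ := h
  rcases hs.lexProd_cases with hcopy | hinj
  · exact hs.hasRainbowClique_image (fun x hx y hy hxy => Prod.ext (hcopy x hx y hy) hxy)
      fun a ha b hb _ => (if_pos (hcopy a ha b hb)).symm
  · exact hs.hasRainbowClique_image hinj fun a _ b _ hab => (if_neg hab).symm

end

/-- If K_n has a balanced ℓ-coloring with no rainbow K_q, then so does K_{n²}. -/
theorem balanced_no_rainbow_square (n ℓ q : ℕ)
    (h : ∃ c : Fin n → Fin n → Fin ℓ, IsBalanced c ∧ ¬ HasRainbowClique c q) :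
    ∃ c : Fin (n ^ 2) → Fin (n ^ 2) → Fin ℓ,
      IsBalanced c ∧ ¬ HasRainbowClique c q := by
  obtain ⟨c, hbal, hno⟩ := h
  obtain ⟨hsymm, t, hdeg⟩ := (isBalanced_iff c).1 hbal
  let e : Fin (n ^ 2) ≃ Fin n × Fin n := (finCongr (sq n)).trans finProdFinEquiv.symm
  refine ⟨fun x y => lexProd c (e x) (e y), ?_, fun hr => hno (hr.of_equiv e).of_lexProd⟩
  refine (isBalanced_iff _).2 ⟨fun x y => lexProd_comm hsymm _ _, t + n * t, fun v col => ?_⟩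
  rw [colorDegree_comp_equiv, colorDegree_lexProd, hdeg, hdeg, Fintype.card_fin]
end
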